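/- Fix β ∈ (0,1), r ∈ (0,1), θ ∈ (0,1) with (1−θ)/2 < β < 1−θ. Then r > ρ*_θ(β) implies (1−θ)/2 − δ(β,r) > 0, i.e., the classification-error exponent (1−θ)/2 − δ(β,r) is strictly positive exactly in the Region of Possibility. -/

import Mathlib

/-! The error exponent is below `t/2` (with `t = 1 - θ`) exactly when `r` clears the threshold
`t ρ(β/t)`. In the moderate regime `β < 3t/4` this threshold is the line `β - t/2`, and the
middle branch of `δ` lies below `t/2` automatically. In the strong regime write
`β = t (1 - s²)` with `0 < s ≤ 1/2`: then `4tr - (β + r)²` factors as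
`(r - t(1 - s)²)(t(1 + s)² - r)`, so the middle branch of `δ` lies below `t/2` exactly when
`r > t(1 - s)² = t ρ(β/t)`, and `s ≤ 1/2` makes the two outer branches agree with this. -/

/-- The standard phase boundary function. -/
noncomputable def rho (b : ℝ) : ℝ :=
  if b ≤ 1 / 2 then 0
  else if b < 3 / 4 then b - 1 / 2
  else (1 - Real.sqrt (1 - b)) ^ 2

/-- The rescaled phase boundary. -/
noncomputable def rhoStar (θ β : ℝ) : ℝ := (1 - θ) * rho (β / (1 - θ))

/-- The exponent function `δ(β, r)`. -/
noncomputable def deltaExp (β r : ℝ) : ℝ :=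
  if r ≤ β / 3 then β - r
  else if r < β then (β + r) ^ 2 / (8 * r)
  else β / 2

lemma rho_of_lt_of_lt {b : ℝ} (h₁ : 1 / 2 < b) (h₂ : b < 3 / 4) : rho b = b - 1 / 2 := by
  rw [rho, if_neg h₁.not_ge, if_pos h₂]

lemma rho_one_sub_sq {s : ℝ} (hs₀ : 0 ≤ s) (hs : s ≤ 1 / 2) : rho (1 - s ^ 2) = (1 - s) ^ 2 := by
  have hs2 : s ^ 2 ≤ 1 / 4 := by nlinarith
  rw [rho, if_neg (by linarith), if_neg (by linarith), sub_sub_cancel, Real.sqrt_sq hs₀]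

section deltaExp

variable {β r : ℝ}

lemma deltaExp_of_le_third (h : r ≤ β / 3) : deltaExp β r = β - r := if_pos h

lemma deltaExp_of_third_lt_of_lt (h₁ : β / 3 < r) (h₂ : r < β) :
    deltaExp β r = (β + r) ^ 2 / (8 * r) := by
  rw [deltaExp, if_neg h₁.not_ge, if_pos h₂]

lemma deltaExp_of_le (hβ : 0 < β) (h : β ≤ r) : deltaExp β r = β / 2 := by
  rw [deltaExp, if_neg (by linarith), if_neg h.not_gt]

lemma div_eight_mul_lt_half_iff {t : ℝ} (hr : 0 < r) :
    (β + r) ^ 2 / (8 * r) < t / 2 ↔ (β + r) ^ 2 < 4 * t * r := by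
  rw [div_lt_iff₀ (by positivity)]
  constructor <;> intro h <;> linarith

lemma sq_add_lt_four_mul_iff {t s : ℝ} (ht : 0 ≤ t) (hs : 0 ≤ s) :
    (t * (1 - s ^ 2) + r) ^ 2 < 4 * t * r ↔ t * (1 - s) ^ 2 < r ∧ r < t * (1 + s) ^ 2 := by
  have hroots : t * (1 - s) ^ 2 ≤ t * (1 + s) ^ 2 := by nlinarith [mul_nonneg ht hs]
  rw [← sub_pos, show 4 * t * r - (t * (1 - s ^ 2) + r) ^ 2
      = (r - t * (1 - s) ^ 2) * (t * (1 + s) ^ 2 - r) by ring, mul_pos_iff]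
  constructor
  · rintro (⟨h₁, h₂⟩ | ⟨h₁, h₂⟩)
    · constructor <;> linarith
    · linarith
  · rintro ⟨h₁, h₂⟩
    left; constructor <;> linarith

lemma deltaExp_lt_half_iff_of_lt_three_quarters {t : ℝ} (hr : 0 < r) (h₁ : t / 2 < β)
    (h₂ : β < 3 / 4 * t) : deltaExp β r < t / 2 ↔ β - t / 2 < r := by
  rcases le_or_gt r (β / 3) with hsmall | hmid
  · rw [deltaExp_of_le_third hsmall]
    constructor <;> intro h <;> linarith
  rcases lt_or_ge r β with hlt | hlarge
  · rw [deltaExp_of_third_lt_of_lt hmid hlt, div_eight_mul_lt_half_iff hr]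
    refine iff_of_true ?_ (by linarith)
    have hgap : 4 * t * r - (β + r) ^ 2 = (r - β / 3) * (3 * β - r) + 4 * r * (t - 4 / 3 * β) := by
      ring
    nlinarith [hgap, mul_pos (sub_pos.2 hmid) (show 0 < 3 * β - r by linarith),
      mul_pos hr (show 0 < t - 4 / 3 * β by linarith)]
  · rw [deltaExp_of_le (by linarith) hlarge]
    exact iff_of_true (by linarith) (by linarith)

lemma deltaExp_lt_half_iff_of_one_sub_sq {t s : ℝ} (ht : 0 < t) (hs₀ : 0 < s) (hs : s ≤ 1 / 2)
    (hr : 0 < r) : deltaExp (t * (1 - s ^ 2)) r < t / 2 ↔ t * (1 - s) ^ 2 < r := by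
  rcases le_or_gt r (t * (1 - s ^ 2) / 3) with hsmall | hmid
  · rw [deltaExp_of_le_third hsmall]
    -- `s ≤ 1/2` puts both `t(1 - s)²` and `t(1 - s²) - t/2` above `β/3`
    refine iff_of_false (by nlinarith [mul_nonneg ht.le (show 0 ≤ 1 / 4 - s ^ 2 by nlinarith)]) ?_
    nlinarith [mul_nonneg (mul_nonneg ht.le (show 0 ≤ 1 - s by linarith))
      (show 0 ≤ 1 - 2 * s by linarith)]
  rcases lt_or_ge r (t * (1 - s ^ 2)) with hlt | hlarge
  · rw [deltaExp_of_third_lt_of_lt hmid hlt, div_eight_mul_lt_half_iff hr,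
      sq_add_lt_four_mul_iff ht.le hs₀.le]
    have hupper : r < t * (1 + s) ^ 2 := by nlinarith [mul_pos ht hs₀]
    exact ⟨And.left, fun h ↦ ⟨h, hupper⟩⟩
  · rw [deltaExp_of_le (mul_pos ht (by nlinarith)) hlarge]
    exact iff_of_true (by nlinarith [mul_pos ht hs₀])
      (by nlinarith [mul_pos (mul_pos ht hs₀) (show 0 < 1 - s by linarith)])

end deltaExp

lemma mul_rho_div_lt_iff_deltaExp_lt_half {t β r : ℝ} (h₁ : t / 2 < β) (h₂ : β < t)
    (hr : 0 < r) : t * rho (β / t) < r ↔ deltaExp β r < t / 2 := by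
  have ht : 0 < t := by linarith
  rcases lt_or_ge β (3 / 4 * t) with hmoderate | hstrong
  · have hb : t * (β / t - 1 / 2) = β - t / 2 := by field_simp
    rw [rho_of_lt_of_lt (by rw [lt_div_iff₀ ht]; linarith) (by rw [div_lt_iff₀ ht]; linarith),
      hb, deltaExp_lt_half_iff_of_lt_three_quarters hr h₁ hmoderate]
  · have hb₁ : β / t < 1 := (div_lt_one ht).2 h₂
    have hb₂ : 3 / 4 ≤ β / t := by rw [le_div_iff₀ ht]; linarith
    obtain ⟨s, hs₀, hs, hb⟩ : ∃ s : ℝ, 0 < s ∧ s ≤ 1 / 2 ∧ β / t = 1 - s ^ 2 :=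
      ⟨√(1 - β / t), Real.sqrt_pos.2 (by linarith),
        Real.sqrt_le_iff.2 ⟨by norm_num, by linarith⟩, by rw [Real.sq_sqrt (by linarith)]; ring⟩
    have hβ : β = t * (1 - s ^ 2) := by rw [← hb]; field_simp
    rw [hb, rho_one_sub_sq hs₀.le hs, hβ, deltaExp_lt_half_iff_of_one_sub_sq ht hs₀ hs hr]

theorem error_exponent_positive_iff_general (β r θ : ℝ)
    (hr : r ∈ Set.Ioo (0 : ℝ) 1)
    (h1 : (1 - θ) / 2 < β) (h2 : β < 1 - θ) :
    rhoStar θ β < r ↔ 0 < (1 - θ) / 2 - deltaExp β r := by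
  rw [rhoStar, sub_pos]
  exact mul_rho_div_lt_iff_deltaExp_lt_half h1 h2 hr.1

/-- For `β, r, θ ∈ (0,1)` with `(1-θ)/2 < β < 1-θ`, the classification-error
exponent `(1-θ)/2 - δ(β,r)` is strictly positive exactly when `r > ρ*_θ(β)`,
i.e., exactly in the Region of Possibility. -/
theorem error_exponent_positive_iff (β r θ : ℝ)
    (hβ : β ∈ Set.Ioo (0 : ℝ) 1) (hr : r ∈ Set.Ioo (0 : ℝ) 1)
    (hθ : θ ∈ Set.Ioo (0 : ℝ) 1)
    (h1 : (1 - θ) / 2 < β) (h2 : β < 1 - θ) :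
    rhoStar θ β < r ↔ 0 < (1 - θ) / 2 - deltaExp β r :=
  error_exponent_positive_iff_general β r θ hr h1 h2
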